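/- arXiv:math/0606274 — 4 statements merged into one kernel-verified Lean document; each statement's English description precedes it below -/
import Mathlib

section
/- For every integer d ≥ 1, the quotient (∏_{l=2}^{d+1} (2^{d+1} - l)) / ((d+1)! · ∏_{m=2}^{d} (2^{m+1} - 3)) is at least 1 if 1 ≤ d ≤ 3, and at least 2 if d ≥ 4. -/
open Finset

lemma num_term_nonneg (d : ℕ) : ∀ l ∈ Icc 2 (d+1), (0:ℚ) ≤ (2:ℚ)^(d+1) - (l:ℚ) := by
  intro l hl
  simp only [mem_Icc] at hl
  have h : l ≤ 2^(d+1) := hl.2.trans (Nat.lt_two_pow_self (n := d+1)).le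
  have : (l:ℚ) ≤ (2:ℚ)^(d+1) := by exact_mod_cast h
  linarith

lemma den_pos (d : ℕ) :
    (0:ℚ) < (Nat.factorial (d+1) : ℚ) * ∏ m ∈ Icc 2 d, ((2:ℚ)^(m+1) - 3) := by
  apply mul_pos
  · exact_mod_cast Nat.factorial_pos _
  · apply Finset.prod_pos
    intro m hm
    simp only [mem_Icc] at hm
    have h8 : (2:ℚ)^3 ≤ 2^(m+1) := by
      apply pow_le_pow_right₀ (by norm_num) (by omega)
    norm_num at h8
    linarith

lemma two_mul_le_pow (d : ℕ) (hd : 4 ≤ d) : 2*(d+2) ≤ 2^d := by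
  induction d, hd using Nat.le_induction with
  | base => norm_num
  | succ d hd ih =>
    have h2 : 2 ≤ 2^d := le_trans (by omega) ih
    calc 2*(d+1+2) = 2*(d+2)+2 := by ring
      _ ≤ 2^d + 2^d := by linarith
      _ = 2^(d+1) := by ring

lemma key (d : ℕ) (hd : 4 ≤ d) :
    2 * ((Nat.factorial (d+1) : ℚ) * ∏ m ∈ Icc 2 d, ((2:ℚ)^(m+1) - 3))
      ≤ ∏ l ∈ Icc 2 (d+1), ((2:ℚ)^(d+1) - (l:ℚ)) := by
  induction d, hd using Nat.le_induction with
  | base =>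
    rw [show Icc 2 5 = ({2,3,4,5} : Finset ℕ) by decide,
        show Icc 2 4 = ({2,3,4} : Finset ℕ) by decide]
    norm_num [Nat.factorial]
  | succ d hd ih =>
    have h1n : 2*(d+2) ≤ 2^d := two_mul_le_pow d hd
    have h1 : 2*((d:ℚ)+2) ≤ 2^d := by exact_mod_cast h1n
    have hb : (16:ℚ) ≤ 2^d := by
      calc (16:ℚ) = 2^4 := by norm_num
        _ ≤ 2^d := by apply pow_le_pow_right₀ (by norm_num) hd
    have ha : (2:ℚ)^(d+1+1) = 4 * 2^d := by ring
    -- split the new numerator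
    rw [Finset.prod_Icc_succ_top (by omega : 2 ≤ d+1+1)]
    set Q : ℚ := ∏ l ∈ Icc 2 (d+1), ((2:ℚ)^(d+1) - (l:ℚ)) with hQ
    have hQ0 : 0 ≤ Q := Finset.prod_nonneg (num_term_nonneg d)
    have hPQ : 2^d * Q ≤ ∏ l ∈ Icc 2 (d+1), ((2:ℚ)^(d+1+1) - (l:ℚ)) := by
      have hle : ∏ l ∈ Icc 2 (d+1), ((2:ℚ) * ((2:ℚ)^(d+1) - (l:ℚ)))
          ≤ ∏ l ∈ Icc 2 (d+1), ((2:ℚ)^(d+1+1) - (l:ℚ)) := by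
        apply Finset.prod_le_prod
        · intro l hl
          have := num_term_nonneg d l hl
          linarith
        · intro l hl
          have hl0 : (0:ℚ) ≤ l := by positivity
          have h2 : (2:ℚ)^(d+1+1) = 2 * 2^(d+1) := by ring
          rw [h2]; linarith
      calc (2:ℚ)^d * Q = ∏ l ∈ Icc 2 (d+1), ((2:ℚ) * ((2:ℚ)^(d+1) - (l:ℚ))) := by
            rw [Finset.prod_mul_distrib, Finset.prod_const, Nat.card_Icc,
                show d+1+1-2 = d from rfl]
        _ ≤ _ := hle
    -- denominator recursion
    rw [Finset.prod_Icc_succ_top (by omega : 2 ≤ d+1), Nat.factorial_succ (d+1)]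
    push_cast
    set Pm : ℚ := ∏ m ∈ Icc 2 d, ((2:ℚ)^(m+1) - 3) with hPm
    set F : ℚ := (Nat.factorial (d+1) : ℚ) with hF
    have hden : (0:ℚ) < F * Pm := den_pos d
    have hc0 : (0:ℚ) ≤ (2:ℚ)^(d+1+1) - ((d:ℚ)+1+1) := by rw [ha]; linarith
    have hkey : ((d:ℚ)+1+1)*((2:ℚ)^(d+1+1) - 3) ≤ 2^d * ((2:ℚ)^(d+1+1) - ((d:ℚ)+1+1)) := by
      rw [ha]; nlinarith [h1, hb]
    have hmm : (((d:ℚ)+1+1)*((2:ℚ)^(d+1+1)-3)) * (2 * (F*Pm))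
        ≤ (2^d * ((2:ℚ)^(d+1+1) - ((d:ℚ)+1+1))) * Q :=
      mul_le_mul hkey ih (by positivity) (mul_nonneg (by positivity) hc0)
    have hfin : ((2:ℚ)^(d+1+1) - ((d:ℚ)+1+1)) * (2^d * Q)
        ≤ ((2:ℚ)^(d+1+1) - ((d:ℚ)+1+1)) * ∏ l ∈ Icc 2 (d+1), ((2:ℚ)^(d+1+1) - (l:ℚ)) :=
      mul_le_mul_of_nonneg_left hPQ hc0
    calc 2*((((d:ℚ)+1+1) * F) * (Pm * ((2:ℚ)^(d+1+1) - 3)))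
        = (((d:ℚ)+1+1)*((2:ℚ)^(d+1+1)-3)) * (2 * (F*Pm)) := by ring
      _ ≤ (2^d * ((2:ℚ)^(d+1+1) - ((d:ℚ)+1+1))) * Q := hmm
      _ = ((2:ℚ)^(d+1+1) - ((d:ℚ)+1+1)) * (2^d * Q) := by ring
      _ ≤ ((2:ℚ)^(d+1+1) - ((d:ℚ)+1+1)) * ∏ l ∈ Icc 2 (d+1), ((2:ℚ)^(d+1+1) - (l:ℚ)) := hfin
      _ = (∏ l ∈ Icc 2 (d+1), ((2:ℚ)^(d+1+1) - (l:ℚ))) * ((2:ℚ)^(d+1+1) - ((d:ℚ)+1+1)) := by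
          ring

/-- Lemma: for `d ≥ 1` the quotient
`(∏_{l=2}^{d+1} (2^{d+1} - l)) / ((d+1)! · ∏_{m=2}^{d} (2^{m+1} - 3))`
is at least `1` if `1 ≤ d ≤ 3` and at least `2` if `d ≥ 4`. -/
theorem stmt_0 (d : ℕ) (hd : 1 ≤ d) :
    (if d ≤ 3 then (1 : ℚ) else 2) ≤
      (∏ l ∈ Finset.Icc 2 (d + 1), ((2 : ℚ) ^ (d + 1) - (l : ℚ))) /
        ((Nat.factorial (d + 1) : ℚ) *
          ∏ m ∈ Finset.Icc 2 d, ((2 : ℚ) ^ (m + 1) - 3)) := by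
  rw [le_div_iff₀ (den_pos d)]
  split_ifs with h3
  · interval_cases d
    · rw [show Icc 2 2 = ({2} : Finset ℕ) by decide,
          show Icc 2 1 = (∅ : Finset ℕ) by decide]
      norm_num [Nat.factorial]
    · rw [show Icc 2 3 = ({2,3} : Finset ℕ) by decide,
          show Icc 2 2 = ({2} : Finset ℕ) by decide]
      norm_num [Nat.factorial]
    · rw [show Icc 2 4 = ({2,3,4} : Finset ℕ) by decide,
          show Icc 2 3 = ({2,3} : Finset ℕ) by decide]
      norm_num [Nat.factorial]
  · exact key d (by omega)
end

section
/- For every integer d ≥ 4, d · ∏_{l=0}^{d-2} (2^{d+2} - d - 6 - l) ≥ (d+1)! · ∏_{l=2}^{d} (2^{l+1} - 3). -/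
/-!
Dropping the `- 3`'s on the left and bounding every factor on the right from below by
`3 · 2^d` (possible since `2^d ≥ 2d + 4`), it suffices for `d ≥ 5` to show
`(d+1)! · ∏_{l=2}^{d} 2^{l+1} ≤ d · (3 · 2^d)^{d-1}`. Going from `d` to `d + 1` multiplies the
left side by `(d+2) · 2^{d+2}` and the right side by `3 · 4^d · (d+1)/d`, so this follows by
induction from `4d(d+2) ≤ 3(d+1) · 2^d`. The case `d = 4`, where the cruder bound fails, is a
direct computation.
-/

open Nat Finset

lemma two_mul_add_four_le_two_pow {d : ℕ} (hd : 4 ≤ d) : 2 * d + 4 ≤ 2 ^ d := by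
  induction d, hd using Nat.le_induction with
  | base => norm_num
  | succ n _ ih => rw [pow_succ]; omega

lemma four_mul_mul_add_two_le_three_mul_mul_two_pow {d : ℕ} (hd : 4 ≤ d) :
    4 * d * (d + 2) ≤ 3 * (d + 1) * 2 ^ d := by
  have := two_mul_add_four_le_two_pow hd
  nlinarith

lemma factorial_mul_prod_two_pow_le {d : ℕ} (hd : 5 ≤ d) :
    (d + 1)! * ∏ l ∈ Icc 2 d, 2 ^ (l + 1) ≤ d * (3 * 2 ^ d) ^ (d - 1) := by
  induction d, hd using Nat.le_induction with
  | base => decide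
  | succ n hn ih =>
    obtain ⟨k, rfl⟩ : ∃ k, n = k + 1 := ⟨n - 1, by omega⟩
    have hstep := four_mul_mul_add_two_le_three_mul_mul_two_pow (d := k + 1) (by omega)
    rw [prod_Icc_succ_top (by omega), factorial_succ]
    simp only [Nat.add_sub_cancel] at ih ⊢
    calc (k + 1 + 1 + 1) * (k + 1 + 1)! *
          ((∏ l ∈ Icc 2 (k + 1), 2 ^ (l + 1)) * 2 ^ (k + 1 + 1 + 1))
        = ((k + 1 + 1)! * ∏ l ∈ Icc 2 (k + 1), 2 ^ (l + 1)) * ((k + 3) * 2 ^ (k + 3)) := by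
          ring
      _ ≤ (k + 1) * (3 * 2 ^ (k + 1)) ^ k * ((k + 3) * 2 ^ (k + 3)) := by gcongr
      _ = 4 * (k + 1) * (k + 1 + 2) * 2 ^ (k + 1) * (3 * 2 ^ (k + 1)) ^ k := by ring
      _ ≤ 3 * (k + 1 + 1) * 2 ^ (k + 1) * 2 ^ (k + 1) * (3 * 2 ^ (k + 1)) ^ k := by gcongr
      _ = (k + 1 + 1) * (2 * (3 * 2 ^ (k + 1))) ^ (k + 1) := by
          rw [mul_pow 2 _ (k + 1), pow_succ (3 * 2 ^ (k + 1)) k]; ring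
      _ = (k + 1 + 1) * (3 * 2 ^ (k + 1 + 1)) ^ (k + 1) := by rw [pow_succ 2 (k + 1)]; ring

lemma three_mul_two_pow_le_two_pow_sub {d l : ℕ} (hd : 4 ≤ d) (hl : l < d - 1) :
    3 * 2 ^ d ≤ 2 ^ (d + 2) - d - 6 - l := by
  have := two_mul_add_four_le_two_pow hd
  rw [pow_add]
  omega

/-- For every `d ≥ 4`,
`d · ∏_{l=0}^{d-2} (2^{d+2} - d - 6 - l) ≥ (d+1)! · ∏_{l=2}^{d} (2^{l+1} - 3)`. -/
theorem stmt_3 (d : ℕ) (hd : 4 ≤ d) :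
    Nat.factorial (d + 1) * ∏ l ∈ Finset.Icc 2 d, (2 ^ (l + 1) - 3) ≤
      d * ∏ l ∈ Finset.range (d - 1), (2 ^ (d + 2) - d - 6 - l) := by
  obtain rfl | hd5 := hd.eq_or_lt
  · decide
  calc (d + 1)! * ∏ l ∈ Icc 2 d, (2 ^ (l + 1) - 3)
      ≤ (d + 1)! * ∏ l ∈ Icc 2 d, 2 ^ (l + 1) := by
        gcongr with l; exact Nat.sub_le _ _
    _ ≤ d * (3 * 2 ^ d) ^ (d - 1) := factorial_mul_prod_two_pow_le hd5
    _ ≤ d * ∏ l ∈ range (d - 1), (2 ^ (d + 2) - d - 6 - l) := by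
        gcongr
        simpa using pow_card_le_prod (range (d - 1)) _ _ fun l hl =>
          three_mul_two_pow_le_two_pow_sub hd (mem_range.mp hl)
end

section
/- Let Δ be a pure d-dimensional simplicial complex on a finite vertex set in which every (d-1)-dimensional face is contained in at least two d-dimensional faces. Then for every 0 ≤ i ≤ d-1, f_i(Δ) ≤ (1/2) · C(d+1, i+1) · f_d(Δ), and consequently ∑_{i=0}^{d} f_i(Δ) ≤ 2^d · f_d(Δ). -/
/-!
Double count the pairs `(σ, τ)` with `σ` an `i`-face contained in a facet `τ`. Every facet
contains exactly `C(d+1, i+1)` faces of dimension `i`, while every face of dimension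
`i < d` lies in a ridge (by purity) and hence in at least two facets. This gives
`2 f_i ≤ C(d+1, i+1) f_d`, and summing over `i < d` with `∑_{i<d} C(d+1, i+1) = 2^(d+1) - 2`
gives the bound on the total face count.
-/

open Finset

section

variable {V : Type*} [DecidableEq V]

theorem filter_card_eq_subset_eq_powersetCard {Δ : Finset (Finset V)}
    (hΔ : ∀ s ∈ Δ, ∀ t ⊆ s, t ∈ Δ) {t : Finset V} (ht : t ∈ Δ) (k : ℕ) :
    {s ∈ Δ | s.card = k ∧ s ⊆ t} = t.powersetCard k := by
  ext s
  simp only [mem_filter, mem_powersetCard]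
  exact ⟨fun ⟨_, hk, hst⟩ => ⟨hst, hk⟩, fun ⟨hst, hk⟩ => ⟨hΔ t ht s hst, hk, hst⟩⟩

theorem two_le_card_facets_superset {Δ : Finset (Finset V)} {d : ℕ}
    (hΔ : ∀ s ∈ Δ, ∀ t ⊆ s, t ∈ Δ)
    (hpure : ∀ s ∈ Δ, ∃ t ∈ Δ, t.card = d + 1 ∧ s ⊆ t)
    (hridge : ∀ s ∈ Δ, s.card = d → 2 ≤ #{t ∈ Δ | t.card = d + 1 ∧ s ⊆ t})
    {s : Finset V} (hs : s ∈ Δ) (hsd : s.card ≤ d) :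
    2 ≤ #{t ∈ Δ | t.card = d + 1 ∧ s ⊆ t} := by
  obtain ⟨u, hu, hucard, hsu⟩ := hpure s hs
  obtain ⟨r, hsr, hru, hrcard⟩ := exists_subsuperset_card_eq hsu hsd (by omega)
  calc 2 ≤ #{t ∈ Δ | t.card = d + 1 ∧ r ⊆ t} := hridge r (hΔ u hu r hru) hrcard
    _ ≤ #{t ∈ Δ | t.card = d + 1 ∧ s ⊆ t} :=
      card_le_card <| monotone_filter_right _ fun _ _ ⟨hcard, hrt⟩ => ⟨hcard, hsr.trans hrt⟩

theorem two_mul_card_faces_le_choose_mul_card_facets {Δ : Finset (Finset V)} {k n : ℕ}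
    (hΔ : ∀ s ∈ Δ, ∀ t ⊆ s, t ∈ Δ)
    (hcover : ∀ s ∈ Δ, s.card = k → 2 ≤ #{t ∈ Δ | t.card = n ∧ s ⊆ t}) :
    2 * #{s ∈ Δ | s.card = k} ≤ n.choose k * #{t ∈ Δ | t.card = n} := by
  rw [mul_comm 2, mul_comm (n.choose k)]
  refine card_mul_le_card_mul (· ⊆ ·) (fun s hs => ?_) (fun t ht => ?_)
  · rw [mem_filter] at hs
    simpa only [bipartiteAbove, filter_filter] using hcover s hs.1 hs.2
  · rw [mem_filter] at ht
    rw [bipartiteBelow, filter_filter, filter_card_eq_subset_eq_powersetCard hΔ ht.1,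
      card_powersetCard, ht.2]

end

theorem sum_range_choose_succ_add_two (d : ℕ) :
    ∑ i ∈ range d, (d + 1).choose (i + 1) + 2 = 2 ^ (d + 1) := by
  rw [← Nat.sum_range_choose, sum_range_succ, sum_range_succ', Nat.choose_self,
    Nat.choose_zero_right]

theorem stmt_13_general {V : Type*} [DecidableEq V]
    (Δ : Finset (Finset V)) (d : ℕ)
    (hΔ : ∀ s ∈ Δ, ∀ t ⊆ s, t ∈ Δ)
    (hpure : ∀ s ∈ Δ, ∃ t ∈ Δ, t.card = d + 1 ∧ s ⊆ t)
    (hridge : ∀ s ∈ Δ, s.card = d →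
      2 ≤ (Δ.filter fun t => t.card = d + 1 ∧ s ⊆ t).card) :
    (∀ i < d, 2 * (Δ.filter fun s => s.card = i + 1).card ≤
        (d + 1).choose (i + 1) * (Δ.filter fun s => s.card = d + 1).card) ∧
      ∑ i ∈ Finset.range (d + 1), (Δ.filter fun s => s.card = i + 1).card ≤
        2 ^ d * (Δ.filter fun s => s.card = d + 1).card := by
  set f : ℕ → ℕ := fun i => #{s ∈ Δ | s.card = i + 1}
  have hface : ∀ i < d, 2 * f i ≤ (d + 1).choose (i + 1) * f d := fun i hi =>
    two_mul_card_faces_le_choose_mul_card_facets hΔ fun s hs hcard =>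
      two_le_card_facets_superset hΔ hpure hridge hs (by omega)
  refine ⟨hface, ?_⟩
  have hsum : 2 * ∑ i ∈ range d, f i + 2 * f d ≤ 2 ^ (d + 1) * f d := by
    calc 2 * ∑ i ∈ range d, f i + 2 * f d
        ≤ ∑ i ∈ range d, (d + 1).choose (i + 1) * f d + 2 * f d := by
          rw [mul_sum]
          exact Nat.add_le_add_right (sum_le_sum fun i hi => hface i (mem_range.mp hi)) _
      _ = 2 ^ (d + 1) * f d := by rw [← sum_mul, ← add_mul, sum_range_choose_succ_add_two]
  show ∑ i ∈ range (d + 1), f i ≤ 2 ^ d * f d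
  rw [sum_range_succ]
  rw [pow_succ] at hsum
  linarith

/-- Let `Δ` be a pure `d`-dimensional simplicial complex in which every
`(d-1)`-dimensional face is contained in at least two `d`-dimensional faces.
Then for every `0 ≤ i ≤ d-1` one has `f_i(Δ) ≤ (1/2) C(d+1, i+1) f_d(Δ)`
(stated as `2 f_i(Δ) ≤ C(d+1, i+1) f_d(Δ)`), and consequently
`∑_{i=0}^{d} f_i(Δ) ≤ 2^d · f_d(Δ)`. -/
theorem stmt_13 {V : Type*} [DecidableEq V]
    (Δ : Finset (Finset V)) (d : ℕ)
    (hΔ : ∀ s ∈ Δ, ∀ t ⊆ s, t ∈ Δ)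
    (hdim : ∀ s ∈ Δ, s.card ≤ d + 1)
    (hpure : ∀ s ∈ Δ, ∃ t ∈ Δ, t.card = d + 1 ∧ s ⊆ t)
    (hridge : ∀ s ∈ Δ, s.card = d →
      2 ≤ (Δ.filter fun t => t.card = d + 1 ∧ s ⊆ t).card) :
    (∀ i < d, 2 * (Δ.filter fun s => s.card = i + 1).card ≤
        (d + 1).choose (i + 1) * (Δ.filter fun s => s.card = d + 1).card) ∧
      ∑ i ∈ Finset.range (d + 1), (Δ.filter fun s => s.card = i + 1).card ≤
        2 ^ d * (Δ.filter fun s => s.card = d + 1).card :=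
  stmt_13_general Δ d hΔ hpure hridge
end

section
/- Let Δ be a simplicial complex of dimension d such that every (d-1)-dimensional face of Δ is contained in at least two d-dimensional faces. Then f_i(Δ) ≥ C(d+2, i+1) for all 0 ≤ i ≤ d, and hence 1 + ∑_{j=0}^{d} f_j(Δ) ≥ 2^{d+2} - 1; in particular ∑_{l=0}^{d-1} f_l(Δ) ≥ 2^{d+2} - d - 4. -/
open Finset

private lemma key_lb {V : Type*} [DecidableEq V] :
    ∀ (d : ℕ) (Δ : Finset (Finset V)),
      (∀ s ∈ Δ, ∀ t ⊆ s, t ∈ Δ) →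
      (∃ s ∈ Δ, s.card = d + 1) →
      (∀ s ∈ Δ, s.card = d → 2 ≤ (Δ.filter fun t => t.card = d + 1 ∧ s ⊆ t).card) →
      ∀ i ≤ d, (d + 2).choose (i + 1) ≤ (Δ.filter fun s => s.card = i + 1).card := by
  intro d
  induction d with
  | zero =>
    intro Δ hΔ ⟨F, hF, hFc⟩ hridge i hi
    have hi0 : i = 0 := Nat.le_zero.mp hi
    subst hi0
    have hemp : (∅ : Finset V) ∈ Δ := hΔ F hF ∅ (empty_subset F)
    have h2 := hridge ∅ hemp (by simp)
    calc (2:ℕ).choose 1 = 2 := by norm_num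
      _ ≤ (Δ.filter fun t => t.card = 1 ∧ ∅ ⊆ t).card := h2
      _ ≤ (Δ.filter fun s => s.card = 1).card := by
          apply card_le_card
          intro x hx
          rw [mem_filter] at hx ⊢
          exact ⟨hx.1, hx.2.1⟩
  | succ d ih =>
    intro Δ hΔ ⟨F, hF, hFc⟩ hridge i hi
    have hFne : F.Nonempty := by
      rw [← Finset.card_pos, hFc]; omega
    obtain ⟨v, hv⟩ := hFne
    set L : Finset (Finset V) := Δ.filter (fun s => v ∉ s ∧ insert v s ∈ Δ) with hLdef
    have hmemL : ∀ s, s ∈ L ↔ s ∈ Δ ∧ v ∉ s ∧ insert v s ∈ Δ := by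
      intro s; simp [hLdef]
    have hLdown : ∀ s ∈ L, ∀ t ⊆ s, t ∈ L := by
      intro s hs t hts
      rw [hmemL] at hs ⊢
      refine ⟨hΔ s hs.1 t hts, fun hvt => hs.2.1 (hts hvt), ?_⟩
      exact hΔ _ hs.2.2 _ (insert_subset_insert v hts)
    have hLtop : ∃ s ∈ L, s.card = d + 1 := by
      refine ⟨F.erase v, ?_, ?_⟩
      · rw [hmemL]
        exact ⟨hΔ F hF _ (erase_subset v F), notMem_erase v F,
          by rw [insert_erase hv]; exact hF⟩
      · rw [card_erase_of_mem hv, hFc]; omega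
    have hLridge : ∀ s ∈ L, s.card = d →
        2 ≤ (L.filter fun t => t.card = d + 1 ∧ s ⊆ t).card := by
      intro s hs hsc
      rw [hmemL] at hs
      have hvs := hs.2.1
      have hcard : (insert v s).card = d + 1 := by
        rw [card_insert_of_notMem hvs, hsc]
      have h2 := hridge (insert v s) hs.2.2 hcard
      refine le_trans h2 ?_
      apply Finset.card_le_card_of_injOn (fun t => t.erase v)
      · intro t ht
        simp only [mem_coe, mem_filter] at ht ⊢
        obtain ⟨htΔ, htc, hst⟩ := ht
        have hvt : v ∈ t := hst (mem_insert_self v s)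
        refine ⟨?_, ?_, ?_⟩
        · rw [hmemL]
          exact ⟨hΔ t htΔ _ (erase_subset v t), notMem_erase v t,
            by rw [insert_erase hvt]; exact htΔ⟩
        · rw [card_erase_of_mem hvt, htc]; omega
        · intro x hx
          exact mem_erase.2 ⟨fun h => hvs (h ▸ hx), hst (mem_insert_of_mem hx)⟩
      · intro a ha b hb hab
        simp only [coe_filter, Set.mem_setOf_eq] at ha hb
        have hva : v ∈ a := ha.2.2 (mem_insert_self v s)
        have hvb : v ∈ b := hb.2.2 (mem_insert_self v s)
        have hab' : a.erase v = b.erase v := hab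
        rw [← insert_erase hva, ← insert_erase hvb, hab']
    have hL : ∀ k ≤ d + 1, (d + 2).choose k ≤ (L.filter fun s => s.card = k).card := by
      intro k hk
      match k with
      | 0 =>
        simp only [Nat.choose_zero_right]
        rw [Nat.one_le_iff_ne_zero, ← Nat.pos_iff_ne_zero, card_pos]
        refine ⟨∅, mem_filter.2 ⟨?_, rfl⟩⟩
        rw [hmemL]
        refine ⟨hΔ F hF ∅ (empty_subset F), notMem_empty v, ?_⟩
        exact hΔ F hF _ (by simp [insert_subset_iff, hv])
      | k + 1 =>
        exact ih L hLdown hLtop hLridge k (by omega)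
    have hsplit : ∀ m : ℕ,
        (Δ.filter fun s => s.card = m).card
          = ((Δ.filter fun s => s.card = m).filter fun s => v ∈ s).card
            + ((Δ.filter fun s => s.card = m).filter fun s => v ∉ s).card := by
      intro m
      exact (Finset.card_filter_add_card_filter_not (fun s => v ∈ s)).symm
    have hcontain : ∀ m : ℕ,
        (L.filter fun s => s.card = m).card
          ≤ ((Δ.filter fun s => s.card = m + 1).filter fun s => v ∈ s).card := by
      intro m
      apply Finset.card_le_card_of_injOn (fun s => insert v s)
      · intro s hs
        rw [mem_coe, mem_filter] at hs
        obtain ⟨hsL, hsc⟩ := hs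
        rw [hmemL] at hsL
        simp only [mem_coe, mem_filter]
        exact ⟨⟨hsL.2.2, by rw [card_insert_of_notMem hsL.2.1, hsc]⟩,
          mem_insert_self v s⟩
      · intro a ha b hb hab
        simp only [coe_filter, Set.mem_setOf_eq, hmemL] at ha hb
        have hab' : insert v a = insert v b := hab
        rw [← erase_insert ha.1.2.1, ← erase_insert hb.1.2.1, hab']
    have hnotcontain : ∀ m : ℕ,
        (L.filter fun s => s.card = m).card
          ≤ ((Δ.filter fun s => s.card = m).filter fun s => v ∉ s).card := by
      intro m
      apply card_le_card
      intro s hs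
      simp only [mem_filter] at hs ⊢
      rw [hmemL] at hs
      exact ⟨⟨hs.1.1, hs.2⟩, hs.1.2.1⟩
    rcases Nat.lt_or_ge i (d + 1) with hid | hid
    · have h1 := hL i (by omega)
      have h2 := hL (i + 1) (by omega)
      calc (d + 1 + 2).choose (i + 1)
          = (d + 2).choose i + (d + 2).choose (i + 1) := Nat.choose_succ_succ (d + 2) i
        _ ≤ ((Δ.filter fun s => s.card = i + 1).filter fun s => v ∈ s).card
            + ((Δ.filter fun s => s.card = i + 1).filter fun s => v ∉ s).card := by
            have := hcontain i
            have := hnotcontain (i + 1)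
            omega
        _ = (Δ.filter fun s => s.card = i + 1).card := (hsplit (i + 1)).symm
    · have hieq : i = d + 1 := by omega
      subst hieq
      have h1 := hL (d + 1) (le_refl _)
      have hc1 := hcontain (d + 1)
      have hR : F.erase v ∈ Δ := hΔ F hF _ (erase_subset v F)
      have hRc : (F.erase v).card = d + 1 := by rw [card_erase_of_mem hv, hFc]; omega
      have h2 := hridge (F.erase v) hR hRc
      obtain ⟨F', hF', hFF'⟩ :=
        Finset.exists_mem_ne (by omega : 1 < (Δ.filter fun t =>
          t.card = d + 1 + 1 ∧ F.erase v ⊆ t).card) F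
      simp only [mem_filter] at hF'
      have hvF' : v ∉ F' := by
        intro hvin
        apply hFF'
        have hsub : F ⊆ F' := by
          intro x hx
          rcases eq_or_ne x v with rfl | hxv
          · exact hvin
          · exact hF'.2.2 (mem_erase.2 ⟨hxv, hx⟩)
        have hcardle : F'.card ≤ F.card := by omega
        exact (Finset.eq_of_subset_of_card_le hsub hcardle).symm
      have hF'mem : F' ∈ (Δ.filter fun s => s.card = d + 1 + 1).filter fun s => v ∉ s :=
        mem_filter.2 ⟨mem_filter.2 ⟨hF'.1, hF'.2.1⟩, hvF'⟩
      have hpos : 1 ≤ ((Δ.filter fun s => s.card = d + 1 + 1).filter fun s => v ∉ s).card :=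
        card_pos.2 ⟨F', hF'mem⟩
      have hch : (d + 1 + 2).choose (d + 1 + 1) = d + 3 :=
        Nat.choose_succ_self_right (d + 2)
      have hchoose : (d + 2).choose (d + 1) = d + 2 :=
        Nat.choose_succ_self_right (d + 1)
      have := hsplit (d + 1 + 1)
      omega

/-- Let `Δ` be a simplicial complex of dimension `d` such that every
`(d-1)`-dimensional face is contained in at least two `d`-dimensional faces.
Then `f_i(Δ) ≥ C(d+2, i+1)` for all `0 ≤ i ≤ d` (the `f`-vector of the
boundary of the `(d+1)`-simplex), hence `1 + ∑_{j=0}^{d} f_j(Δ) ≥ 2^{d+2} - 1`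
and in particular `∑_{l=0}^{d-1} f_l(Δ) ≥ 2^{d+2} - d - 4`. -/
theorem stmt_15 {V : Type*} [DecidableEq V]
    (Δ : Finset (Finset V)) (d : ℕ)
    (hΔ : ∀ s ∈ Δ, ∀ t ⊆ s, t ∈ Δ)
    (hdim : ∀ s ∈ Δ, s.card ≤ d + 1)
    (htop : ∃ s ∈ Δ, s.card = d + 1)
    (hridge : ∀ s ∈ Δ, s.card = d →
      2 ≤ (Δ.filter fun t => t.card = d + 1 ∧ s ⊆ t).card) :
    (∀ i ≤ d, (d + 2).choose (i + 1) ≤ (Δ.filter fun s => s.card = i + 1).card) ∧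
      2 ^ (d + 2) - 1 ≤
        1 + ∑ j ∈ Finset.range (d + 1), (Δ.filter fun s => s.card = j + 1).card ∧
      2 ^ (d + 2) - d - 4 ≤
        ∑ l ∈ Finset.range d, (Δ.filter fun s => s.card = l + 1).card := by
  have key := key_lb d Δ hΔ htop hridge
  refine ⟨key, ?_, ?_⟩
  all_goals {
    have hsum : ∑ k ∈ Finset.range (d + 3), (d + 2).choose k = 2 ^ (d + 2) :=
      Nat.sum_range_choose (d + 2)
    have hsum1 : ∑ k ∈ Finset.range (d + 3), (d + 2).choose k
        = (∑ j ∈ Finset.range (d + 2), (d + 2).choose (j + 1)) + (d + 2).choose 0 :=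
      Finset.sum_range_succ' _ (d + 2)
    have hsum2 : ∑ j ∈ Finset.range (d + 2), (d + 2).choose (j + 1)
        = (∑ j ∈ Finset.range (d + 1), (d + 2).choose (j + 1)) + (d + 2).choose (d + 2) :=
      Finset.sum_range_succ _ (d + 1)
    have hsum3 : ∑ j ∈ Finset.range (d + 1), (d + 2).choose (j + 1)
        = (∑ j ∈ Finset.range d, (d + 2).choose (j + 1)) + (d + 2).choose (d + 1) :=
      Finset.sum_range_succ _ d
    have hcd2 : (d + 2).choose (d + 2) = 1 := Nat.choose_self (d + 2)
    have hcd1 : (d + 2).choose (d + 1) = d + 2 := Nat.choose_succ_self_right (d + 1)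
    have hbig : ∑ j ∈ Finset.range (d + 1), (d + 2).choose (j + 1)
        ≤ ∑ j ∈ Finset.range (d + 1), (Δ.filter fun s => s.card = j + 1).card :=
      Finset.sum_le_sum (fun j hj => key j (by
        simp only [Finset.mem_range] at hj; omega))
    have hsmall : ∑ l ∈ Finset.range d, (d + 2).choose (l + 1)
        ≤ ∑ l ∈ Finset.range d, (Δ.filter fun s => s.card = l + 1).card :=
      Finset.sum_le_sum (fun l hl => key l (by
        simp only [Finset.mem_range] at hl; omega))
    simp only [Nat.choose_zero_right] at hsum1
    omega
  }
end
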